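/- arXiv:0808.0688 — 7 statements merged into one kernel-verified Lean document; each statement's English description precedes it below -/
import Mathlib

section
/- Fix a prime p, integers n ≥ 1 and 1 ≤ k ≤ n, and a ∈ Z_p. Writing δ^k(a + p^n u) = Σ_{j=0}^{p^k} c^k_{a,j} u^j as a polynomial in u, the linear coefficient satisfies |c^k_{a,1}|_p = p^{-(n-k)} exactly. -/
/-!
Applied to polynomials, `δ` becomes `Q ↦ p⁻¹ (Q - Q^p)`, so `δ^k(a + p^n u)` is the polynomial
`P_k` obtained by iterating this map on `a + p^n X`. The linear coefficient of `Q^p` is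
`p Q(0)^(p-1) Q'(0)`, hence `P_{k+1}'(0) = P_k'(0) (p⁻¹ - P_k(0)^(p-1))`. Since `P_k(0) = δ^k(a)`
is a `p`-adic integer, the factor has norm exactly `p`; starting from `‖p^n‖ = p^(-n)` this gives
`‖P_k'(0)‖ = p^(k-n)`. A polynomial is determined by its values on the infinite set `ℤ_[p]`, so
the given `c` are the coefficients of `P_k`.
-/

open Polynomial Finset

namespace Polynomial

variable {R : Type*}

lemma coeff_one_pow [CommSemiring R] (Q : R[X]) (m : ℕ) :
    (Q ^ m).coeff 1 = m * Q.coeff 1 * Q.coeff 0 ^ (m - 1) := by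
  rw [← coeff_coe, coe_pow, PowerSeries.coeff_one_pow, coeff_coe,
    ← PowerSeries.coeff_zero_eq_constantCoeff_apply, coeff_coe]

lemma coeff_sum_range_C_mul_X_pow [Semiring R] (c : ℕ → R) {N m : ℕ} (hm : m < N) :
    (∑ j ∈ range N, C (c j) * X ^ j).coeff m = c m := by
  simp [finsetSum_coeff, hm]

end Polynomial

section FermatQuotient

variable {K : Type*} [Field K]

noncomputable def fermatQuotient (p : ℕ) (Q : K[X]) : K[X] := C (p : K)⁻¹ * (Q - Q ^ p)

lemma coeff_one_fermatQuotient {p : ℕ} (hp : (p : K) ≠ 0) (Q : K[X]) :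
    (fermatQuotient p Q).coeff 1 = Q.coeff 1 * ((p : K)⁻¹ - Q.coeff 0 ^ (p - 1)) := by
  rw [fermatQuotient, coeff_C_mul, coeff_sub, coeff_one_pow]
  field_simp

end FermatQuotient

namespace Padic

/-- `δ^k(a + p^n u)` as a polynomial in `u`. -/
noncomputable def fermatIteratePoly (p : ℕ) [Fact p.Prime] (n k : ℕ) (a : ℚ_[p]) : ℚ_[p][X] :=
  (fermatQuotient p)^[k] (C a + C ((p : ℚ_[p]) ^ n) * X)

variable {p : ℕ} [Fact p.Prime]

lemma norm_inv_p_sub_of_norm_le_one {y : ℚ_[p]} (hy : ‖y‖ ≤ 1) :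
    ‖(p : ℚ_[p])⁻¹ - y‖ = p := by
  have hinv : ‖(p : ℚ_[p])⁻¹‖ = p := by rw [norm_inv, norm_p, inv_inv]
  have hlt : ‖-y‖ < p := by
    rw [norm_neg]
    exact hy.trans_lt (by exact_mod_cast (Fact.out : p.Prime).one_lt)
  rw [sub_eq_add_neg, add_eq_max_of_ne (by rw [hinv]; exact hlt.ne'), hinv,
    max_eq_left hlt.le]

lemma norm_coeff_one_fermatQuotient {Q : ℚ_[p][X]} (hQ : ‖Q.coeff 0‖ ≤ 1) :
    ‖(fermatQuotient p Q).coeff 1‖ = p * ‖Q.coeff 1‖ := by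
  rw [coeff_one_fermatQuotient (by exact_mod_cast (Fact.out : p.Prime).ne_zero), norm_mul,
    norm_inv_p_sub_of_norm_le_one (by simpa using pow_le_one₀ (norm_nonneg _) hQ), mul_comm]

lemma eq_of_eval_eq {P Q : ℚ_[p][X]}
    (h : ∀ u : ℤ_[p], P.eval (u : ℚ_[p]) = Q.eval (u : ℚ_[p])) : P = Q :=
  eq_of_infinite_eval_eq P Q <|
    Set.infinite_of_injective_forall_mem (α := ℤ_[p]) Subtype.coe_injective h

variable {δ : ℤ_[p] → ℤ_[p]} (hδ : ∀ x : ℤ_[p], (p : ℤ_[p]) * δ x = x - x ^ p)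
include hδ

lemma eval_fermatQuotient {Q : ℚ_[p][X]} {x : ℚ_[p]} {y : ℤ_[p]} (hQ : Q.eval x = y) :
    (fermatQuotient p Q).eval x = δ y := by
  have hp : (p : ℚ_[p]) ≠ 0 := by exact_mod_cast (Fact.out : p.Prime).ne_zero
  have hy : (p : ℚ_[p]) * δ y = y - y ^ p := by
    exact_mod_cast congrArg ((↑) : ℤ_[p] → ℚ_[p]) (hδ y)
  rw [fermatQuotient, eval_mul, eval_C, eval_sub, eval_pow, hQ, ← hy, inv_mul_cancel_left₀ hp]

lemma eval_iterate_fermatQuotient {Q : ℚ_[p][X]} {x : ℚ_[p]} {y : ℤ_[p]} (hQ : Q.eval x = y)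
    (k : ℕ) : ((fermatQuotient p)^[k] Q).eval x = (δ^[k] y : ℤ_[p]) := by
  induction k with
  | zero => exact hQ
  | succ k ih => rw [Function.iterate_succ_apply', Function.iterate_succ_apply',
      eval_fermatQuotient hδ ih]

lemma eval_fermatIteratePoly (n k : ℕ) (a u : ℤ_[p]) :
    (fermatIteratePoly p n k a).eval (u : ℚ_[p]) = (δ^[k] (a + (p : ℤ_[p]) ^ n * u) : ℤ_[p]) :=
  eval_iterate_fermatQuotient hδ (by simp) k

lemma norm_coeff_one_fermatIteratePoly (n k : ℕ) (a : ℤ_[p]) :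
    ‖(fermatIteratePoly p n k a).coeff 1‖ = (p : ℝ) ^ ((k : ℤ) - n) := by
  have hp : (p : ℝ) ≠ 0 := by exact_mod_cast (Fact.out : p.Prime).ne_zero
  induction k with
  | zero =>
    simp only [fermatIteratePoly, Function.iterate_zero_apply, coeff_add, coeff_C, coeff_C_mul_X]
    simp
  | succ k ih =>
    have hconst : ‖(fermatIteratePoly p n k a).coeff 0‖ ≤ 1 := by
      have h0 := eval_fermatIteratePoly hδ n k a 0
      rw [PadicInt.coe_zero] at h0
      rw [coeff_zero_eq_eval_zero, h0, PadicInt.padic_norm_e_of_padicInt]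
      exact PadicInt.norm_le_one _
    rw [fermatIteratePoly, Function.iterate_succ_apply', ← fermatIteratePoly,
      norm_coeff_one_fermatQuotient hconst, ih, ← zpow_one_add₀ hp]
    push_cast
    ring_nf

end Padic

theorem fermat_iterate_linear_coeff_general (p : ℕ) [Fact p.Prime]
    (δ : ℤ_[p] → ℤ_[p]) (hδ : ∀ x : ℤ_[p], (p : ℤ_[p]) * δ x = x - x ^ p)
    (n k : ℕ) (a : ℤ_[p]) (c : ℕ → ℚ_[p])
    (hc : ∀ u : ℤ_[p],
      ((δ^[k] (a + (p : ℤ_[p]) ^ n * u) : ℤ_[p]) : ℚ_[p]) =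
        ∑ j ∈ Finset.range (p ^ k + 1), c j * (u : ℚ_[p]) ^ j) :
    ‖c 1‖ = (p : ℝ) ^ (-((n : ℤ) - (k : ℤ))) := by
  have hP : ∑ j ∈ range (p ^ k + 1), C (c j) * X ^ j = Padic.fermatIteratePoly p n k a :=
    Padic.eq_of_eval_eq fun u => by
      simp [eval_finsetSum, Padic.eval_fermatIteratePoly hδ, hc u]
  have h1 : 1 < p ^ k + 1 := Nat.lt_add_of_pos_left (pow_pos (Fact.out : p.Prime).pos k)
  rw [← coeff_sum_range_C_mul_X_pow c h1, hP, Padic.norm_coeff_one_fermatIteratePoly hδ, neg_sub]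

/-- Writing `δ^k(a + p^n u) = Σ_{j=0}^{p^k} c_j u^j` as a polynomial in `u`
(with coefficients in `ℚ_[p]`), for `1 ≤ k ≤ n` the linear coefficient
satisfies `‖c 1‖ = p^(-(n-k))` exactly. -/
theorem fermat_iterate_linear_coeff (p : ℕ) [Fact p.Prime]
    (δ : ℤ_[p] → ℤ_[p]) (hδ : ∀ x : ℤ_[p], (p : ℤ_[p]) * δ x = x - x ^ p)
    (n k : ℕ) (hk1 : 1 ≤ k) (hkn : k ≤ n) (a : ℤ_[p]) (c : ℕ → ℚ_[p])
    (hc : ∀ u : ℤ_[p],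
      ((δ^[k] (a + (p : ℤ_[p]) ^ n * u) : ℤ_[p]) : ℚ_[p]) =
        ∑ j ∈ Finset.range (p ^ k + 1), c j * (u : ℚ_[p]) ^ j) :
    ‖c 1‖ = (p : ℝ) ^ (-((n : ℤ) - (k : ℤ))) :=
  fermat_iterate_linear_coeff_general p δ hδ n k a c hc
end

section
/- For a prime p and m ≥ 0, let C_m = {a ∈ Z_p : δ^m a = 0} be the zero set of the m-th iterate of the Fermat quotient operator. Then the reduction map C_m → Z_p/p^m Z_p is bijective; in particular C_m has exactly p^m elements. -/
/-!
If `a ≡ b (mod p)` then `a - a ^ p - (b - b ^ p)` is `a - b` times a unit, so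
`p ^ (n + 1) ∣ a - b ↔ p ^ n ∣ δ a - δ b`; and by Hensel's lemma, applied to `X - X ^ p - p b`
whose derivative is a unit, every `b` is `δ z` for some `z` in any prescribed residue class
mod `p`. Induction on `m` then shows that every residue class mod `p ^ m` contains
exactly one zero of `δ^[m]`.
-/

open Polynomial

namespace PadicInt

variable {p : ℕ} [Fact p.Prime]

theorem natCast_p_ne_zero : (p : ℤ_[p]) ≠ 0 :=
  Nat.cast_ne_zero.mpr (Fact.out : p.Prime).ne_zero

theorem toZModPow_eq_iff_dvd_sub (n : ℕ) (a b : ℤ_[p]) :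
    toZModPow n a = toZModPow n b ↔ (p : ℤ_[p]) ^ n ∣ a - b := by
  rw [← sub_eq_zero, ← map_sub, ← RingHom.mem_ker, ker_toZModPow, Ideal.mem_span_singleton]

theorem isUnit_one_sub_of_dvd {t : ℤ_[p]} (h : (p : ℤ_[p]) ∣ t) : IsUnit (1 - t) :=
  IsLocalRing.isUnit_one_sub_self_of_mem_nonunits t <|
    mem_nonunits.mpr ((norm_lt_one_iff_dvd t).mpr h)

theorem exists_isUnit_sub_sub_pow_eq_mul {a b : ℤ_[p]} (hab : (p : ℤ_[p]) ∣ a - b) :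
    ∃ u : ℤ_[p], IsUnit u ∧ (a - a ^ p) - (b - b ^ p) = (a - b) * u := by
  refine ⟨1 - ∑ i ∈ Finset.range p, a ^ i * b ^ (p - 1 - i),
    isUnit_one_sub_of_dvd (dvd_geom_sum₂_self hab), ?_⟩
  linear_combination geom_sum₂_mul a b p

end PadicInt

open PadicInt

section FermatQuotient

variable {p : ℕ} [Fact p.Prime] {δ : ℤ_[p] → ℤ_[p]}

theorem exists_isUnit_p_mul_delta_sub_eq_mul
    (hδ : ∀ x : ℤ_[p], (p : ℤ_[p]) * δ x = x - x ^ p)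
    {a b : ℤ_[p]} (hab : (p : ℤ_[p]) ∣ a - b) :
    ∃ u : ℤ_[p], IsUnit u ∧ (p : ℤ_[p]) * (δ a - δ b) = (a - b) * u := by
  rw [mul_sub, hδ, hδ]
  exact exists_isUnit_sub_sub_pow_eq_mul hab

theorem pow_succ_dvd_sub_iff_pow_dvd_delta_sub
    (hδ : ∀ x : ℤ_[p], (p : ℤ_[p]) * δ x = x - x ^ p)
    {a b : ℤ_[p]} (hab : (p : ℤ_[p]) ∣ a - b) (n : ℕ) :
    (p : ℤ_[p]) ^ (n + 1) ∣ a - b ↔ (p : ℤ_[p]) ^ n ∣ δ a - δ b := by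
  obtain ⟨u, hu, h⟩ := exists_isUnit_p_mul_delta_sub_eq_mul hδ hab
  rw [← hu.dvd_mul_right, ← h, pow_succ', mul_dvd_mul_iff_left natCast_p_ne_zero]

theorem eq_of_delta_eq (hδ : ∀ x : ℤ_[p], (p : ℤ_[p]) * δ x = x - x ^ p)
    {a b : ℤ_[p]} (hab : (p : ℤ_[p]) ∣ a - b) (h : δ a = δ b) : a = b := by
  obtain ⟨u, hu, hu_eq⟩ := exists_isUnit_p_mul_delta_sub_eq_mul hδ hab
  rw [h, sub_self, mul_zero, eq_comm, hu.mul_left_eq_zero, sub_eq_zero] at hu_eq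
  exact hu_eq

theorem exists_dvd_sub_and_delta_eq (hδ : ∀ x : ℤ_[p], (p : ℤ_[p]) * δ x = x - x ^ p)
    (x b : ℤ_[p]) : ∃ z : ℤ_[p], (p : ℤ_[p]) ∣ z - x ∧ δ z = b := by
  set F : ℤ_[p][X] := X - X ^ p - C ((p : ℤ_[p]) * b)
  have hF_eval (y : ℤ_[p]) : F.eval y = (p : ℤ_[p]) * (δ y - b) := by
    simp [F, mul_sub, hδ]
  have hF_deriv : ‖F.derivative.eval x‖ = 1 := by
    refine isUnit_iff.mp ?_
    simpa [F, derivative_X_pow] using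
      isUnit_one_sub_of_dvd (dvd_mul_right (p : ℤ_[p]) (x ^ (p - 1)))
  have hF_small : ‖F.eval x‖ < ‖F.derivative.eval x‖ ^ 2 := by
    rw [hF_deriv, one_pow, norm_lt_one_iff_dvd, hF_eval]
    exact dvd_mul_right _ _
  obtain ⟨z, hz, hzx, -⟩ := hensels_lemma (F := F) (a := x) (by simpa only [coe_aeval_eq_eval])
  simp only [coe_aeval_eq_eval, hF_eval, hF_deriv, norm_lt_one_iff_dvd] at hz hzx
  exact ⟨z, hzx, sub_eq_zero.mp ((mul_eq_zero.mp hz).resolve_left natCast_p_ne_zero)⟩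

theorem eq_of_iterate_delta_eq_zero
    (hδ : ∀ x : ℤ_[p], (p : ℤ_[p]) * δ x = x - x ^ p) (m : ℕ)
    {a b : ℤ_[p]} (ha : δ^[m] a = 0) (hb : δ^[m] b = 0) (hab : (p : ℤ_[p]) ^ m ∣ a - b) :
    a = b := by
  induction m generalizing a b with
  | zero => exact ha.trans hb.symm
  | succ m ih =>
    have hab₁ : (p : ℤ_[p]) ∣ a - b := (dvd_pow_self _ m.succ_ne_zero).trans hab
    refine eq_of_delta_eq hδ hab₁ (ih ha hb ?_)
    exact (pow_succ_dvd_sub_iff_pow_dvd_delta_sub hδ hab₁ m).mp hab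

theorem exists_iterate_delta_eq_zero_and_dvd_sub
    (hδ : ∀ x : ℤ_[p], (p : ℤ_[p]) * δ x = x - x ^ p) (m : ℕ) (x : ℤ_[p]) :
    ∃ a : ℤ_[p], δ^[m] a = 0 ∧ (p : ℤ_[p]) ^ m ∣ a - x := by
  induction m generalizing x with
  | zero => exact ⟨0, rfl, by simp⟩
  | succ m ih =>
    obtain ⟨b, hb, hbx⟩ := ih (δ x)
    obtain ⟨z, hzx, rfl⟩ := exists_dvd_sub_and_delta_eq hδ x b
    exact ⟨z, hb, (pow_succ_dvd_sub_iff_pow_dvd_delta_sub hδ hzx m).mpr hbx⟩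

end FermatQuotient

/-- The set `C_m = {a ∈ ℤ_[p] : δ^m a = 0}` maps bijectively onto
`ℤ_[p]/p^m ℤ_[p] ≃ ZMod (p^m)` under reduction; in particular it has exactly
`p^m` elements. -/
theorem zero_set_of_delta_iterate_bijects (p : ℕ) [Fact p.Prime]
    (δ : ℤ_[p] → ℤ_[p]) (hδ : ∀ x : ℤ_[p], (p : ℤ_[p]) * δ x = x - x ^ p)
    (m : ℕ) :
    Function.Bijective
        (fun x : {a : ℤ_[p] // δ^[m] a = 0} => PadicInt.toZModPow m x.val) ∧
      Nat.card {a : ℤ_[p] // δ^[m] a = 0} = p ^ m := by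
  have hbij : Function.Bijective
      (fun x : {a : ℤ_[p] // δ^[m] a = 0} => toZModPow m x.val) := by
    constructor
    · rintro ⟨a, ha⟩ ⟨b, hb⟩ h
      exact Subtype.ext <|
        eq_of_iterate_delta_eq_zero hδ m ha hb ((toZModPow_eq_iff_dvd_sub m a b).mp h)
    · intro c
      obtain ⟨x, rfl⟩ := ZMod.ringHom_surjective (toZModPow m) c
      obtain ⟨a, ha, hax⟩ := exists_iterate_delta_eq_zero_and_dvd_sub hδ m x
      exact ⟨⟨a, ha⟩, (toZModPow_eq_iff_dvd_sub m a x).mpr hax⟩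
  exact ⟨hbij, by rw [Nat.card_eq_of_bijective _ hbij, Nat.card_zmod]⟩
end

section
/- For a prime p and m ≥ 1, the map Z_p → F_p^m sending a to (ā, δa-bar, ..., δ^{m-1}a-bar) (reductions mod p of a, δa, ..., δ^{m-1}a) induces a bijection Z_p/p^m Z_p ≅ F_p^m. -/
open PadicInt Finset

private lemma dvd_iff_toZMod_eq' {p : ℕ} [Fact p.Prime] (a b : ℤ_[p]) :
    (p : ℤ_[p]) ∣ a - b ↔ PadicInt.toZMod a = PadicInt.toZMod b := by
  rw [← Ideal.mem_span_singleton, ← PadicInt.maximalIdeal_eq_span_p, ← PadicInt.ker_toZMod,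
    RingHom.sub_mem_ker_iff]

private lemma dvd_pow_iff_toZModPow_eq' {p : ℕ} [Fact p.Prime] (m : ℕ) (a b : ℤ_[p]) :
    (p : ℤ_[p]) ^ m ∣ a - b ↔ PadicInt.toZModPow m a = PadicInt.toZModPow m b := by
  rw [← Ideal.mem_span_singleton, ← PadicInt.ker_toZModPow, RingHom.sub_mem_ker_iff]

private lemma geom_sum_dvd' {p : ℕ} [hp : Fact p.Prime] {a b : ℤ_[p]}
    (h : (p : ℤ_[p]) ∣ a - b) :
    (p : ℤ_[p]) ∣ ∑ i ∈ Finset.range p, a ^ i * b ^ (p - 1 - i) := by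
  have hx : PadicInt.toZMod a = PadicInt.toZMod b := (dvd_iff_toZMod_eq' a b).mp h
  have : PadicInt.toZMod (∑ i ∈ Finset.range p, a ^ i * b ^ (p - 1 - i)) = 0 := by
    rw [map_sum]
    have : ∀ i ∈ Finset.range p,
        PadicInt.toZMod (a ^ i * b ^ (p - 1 - i)) = (PadicInt.toZMod b) ^ (p - 1) := by
      intro i hi
      rw [map_mul, map_pow, map_pow, hx, ← pow_add]
      congr 1
      have := Finset.mem_range.mp hi
      omega
    rw [Finset.sum_congr rfl this, Finset.sum_const, Finset.card_range, nsmul_eq_mul,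
      ZMod.natCast_self, zero_mul]
  have := (dvd_iff_toZMod_eq' (∑ i ∈ Finset.range p, a ^ i * b ^ (p - 1 - i)) 0).mpr
    (by simpa using this)
  simpa using this

private lemma pow_dvd_pow_sub_pow' {p : ℕ} [hp : Fact p.Prime] {m : ℕ} (hm : 1 ≤ m)
    {a b : ℤ_[p]} (h : (p : ℤ_[p]) ^ m ∣ a - b) :
    (p : ℤ_[p]) ^ (m + 1) ∣ a ^ p - b ^ p := by
  have h1 : (p : ℤ_[p]) ∣ a - b := dvd_trans (dvd_pow_self _ (by omega)) h
  rw [← geom_sum₂_mul, pow_succ']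
  exact mul_dvd_mul (geom_sum_dvd' h1) h

private lemma delta_dvd' {p : ℕ} [hp : Fact p.Prime] (δ : ℤ_[p] → ℤ_[p])
    (hδ : ∀ x : ℤ_[p], (p : ℤ_[p]) * δ x = x - x ^ p) {m : ℕ} (hm : 1 ≤ m) {a b : ℤ_[p]}
    (h : (p : ℤ_[p]) ^ m ∣ a - b) : (p : ℤ_[p]) ^ (m - 1) ∣ δ a - δ b := by
  have h2 : (p : ℤ_[p]) ^ (m + 1) ∣ a ^ p - b ^ p := pow_dvd_pow_sub_pow' hm h
  have key : (p : ℤ_[p]) * (δ a - δ b) = (a - b) - (a ^ p - b ^ p) := by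
    rw [mul_sub, hδ, hδ]; ring
  have hdvd : (p : ℤ_[p]) ^ m ∣ (p : ℤ_[p]) * (δ a - δ b) := by
    rw [key]
    exact dvd_sub h (dvd_trans (pow_dvd_pow _ (by omega)) h2)
  obtain ⟨c, hc⟩ := hdvd
  refine ⟨c, ?_⟩
  have hp0 : (p : ℤ_[p]) ≠ 0 := Nat.cast_ne_zero.mpr hp.out.ne_zero
  apply mul_left_cancel₀ hp0
  have hpm : (p : ℤ_[p]) ^ m = (p : ℤ_[p]) * (p : ℤ_[p]) ^ (m - 1) := by
    rw [← pow_succ']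
    congr 1
    omega
  rw [hc, hpm, mul_assoc]

private lemma fwd' {p : ℕ} [hp : Fact p.Prime] (δ : ℤ_[p] → ℤ_[p])
    (hδ : ∀ x : ℤ_[p], (p : ℤ_[p]) * δ x = x - x ^ p) :
    ∀ (i m : ℕ) (a b : ℤ_[p]), i < m → (p : ℤ_[p]) ^ m ∣ a - b →
      PadicInt.toZMod (δ^[i] a) = PadicInt.toZMod (δ^[i] b) := by
  intro i
  induction i with
  | zero =>
    intro m a b him h
    simp only [Function.iterate_zero_apply]
    exact (dvd_iff_toZMod_eq' a b).mp (dvd_trans (dvd_pow_self _ (by omega)) h)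
  | succ i ih =>
    intro m a b him h
    rw [Function.iterate_succ_apply, Function.iterate_succ_apply]
    exact ih (m - 1) (δ a) (δ b) (by omega) (delta_dvd' δ hδ (by omega) h)

private lemma bwd' {p : ℕ} [hp : Fact p.Prime] (δ : ℤ_[p] → ℤ_[p])
    (hδ : ∀ x : ℤ_[p], (p : ℤ_[p]) * δ x = x - x ^ p) :
    ∀ (m : ℕ) (a b : ℤ_[p]),
      (∀ i < m, PadicInt.toZMod (δ^[i] a) = PadicInt.toZMod (δ^[i] b)) →
      (p : ℤ_[p]) ^ m ∣ a - b := by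
  intro m
  induction m with
  | zero => simp
  | succ m ih =>
    intro a b h
    have h0 : (p : ℤ_[p]) ∣ a - b :=
      (dvd_iff_toZMod_eq' a b).mpr (by simpa using h 0 (by omega))
    have hm : (p : ℤ_[p]) ^ m ∣ a - b := ih a b (fun i hi => h i (by omega))
    have hd : (p : ℤ_[p]) ^ m ∣ δ a - δ b := ih (δ a) (δ b) (fun i hi => by
      have := h (i + 1) (by omega)
      rwa [Function.iterate_succ_apply, Function.iterate_succ_apply] at this)
    have hpow : (p : ℤ_[p]) ^ (m + 1) ∣ a ^ p - b ^ p := by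
      rw [← geom_sum₂_mul, pow_succ']
      exact mul_dvd_mul (geom_sum_dvd' h0) hm
    have key : a - b = (p : ℤ_[p]) * (δ a - δ b) + (a ^ p - b ^ p) := by
      rw [mul_sub, hδ, hδ]; ring
    rw [key]
    exact dvd_add (by rw [pow_succ']; exact mul_dvd_mul_left _ hd) hpow

/-- The map `a ↦ (ā, δa mod p, ..., δ^(m-1)a mod p)` induces a bijection
`ℤ_[p]/p^m ℤ_[p] ≅ F_p^m`. -/
theorem toZModPow_induces_bijection_to_residue_tuples (p : ℕ) [Fact p.Prime]
    (δ : ℤ_[p] → ℤ_[p]) (hδ : ∀ x : ℤ_[p], (p : ℤ_[p]) * δ x = x - x ^ p)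
    (m : ℕ) (hm : 1 ≤ m) :
    ∃ g : ZMod (p ^ m) → (Fin m → ZMod p), Function.Bijective g ∧
      ∀ a : ℤ_[p], g (PadicInt.toZModPow m a) =
        fun i : Fin m => PadicInt.toZMod (δ^[(i : ℕ)] a) := by
  haveI : NeZero (p ^ m) := ⟨pow_ne_zero _ (Fact.out (p := p.Prime)).ne_zero⟩
  set f : ℤ_[p] → (Fin m → ZMod p) := fun a i => PadicInt.toZMod (δ^[(i : ℕ)] a) with hf
  have hkey : ∀ a b : ℤ_[p], PadicInt.toZModPow m a = PadicInt.toZModPow m b ↔ f a = f b := by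
    intro a b
    constructor
    · intro h
      funext i
      exact fwd' δ hδ i m a b i.isLt ((dvd_pow_iff_toZModPow_eq' m a b).mpr h)
    · intro h
      refine (dvd_pow_iff_toZModPow_eq' m a b).mp (bwd' δ hδ m a b (fun i hi => ?_))
      exact congrFun h ⟨i, hi⟩
  have hsec : ∀ z : ZMod (p ^ m), PadicInt.toZModPow m ((z.val : ℤ_[p])) = z := by
    intro z
    rw [map_natCast, ZMod.natCast_val, ZMod.cast_id]
  refine ⟨fun z => f ((z.val : ℕ) : ℤ_[p]), ?_, ?_⟩
  · rw [Fintype.bijective_iff_injective_and_card]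
    constructor
    · intro z1 z2 h
      have := (hkey _ _).mpr h
      rwa [hsec, hsec] at this
    · rw [ZMod.card, Fintype.card_fun, ZMod.card, Fintype.card_fin]
  · intro a
    exact ((hkey _ a).mp (hsec (PadicInt.toZModPow m a)))
end

section
/- Let p be a prime, m ≥ 1, and C_m = {a_0, ..., a_{p^m - 1}} the set of p-adic integers with δ^m a = 0, indexed so that a_α ≡ α (mod p^m) for α ∈ {0,...,p^m-1}. Let W be the p^m × p^m matrix with rows indexed by α ∈ {0,...,p^m-1} and columns indexed by β ∈ {0,...,p-1}^m, with entries w_{αβ} = (a_α)^{β_0} (δ a_α)^{β_1} ⋯ (δ^{m-1} a_α)^{β_{m-1}}. Then det W is a unit in Z_p. -/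
/-!
Reduce modulo `p`. Since `x - y = p (δ x - δ y) + (x ^ p - y ^ p)` and the quotient
`(x ^ p - y ^ p) / (x - y) = ∑ xⁱ yᵖ⁻¹⁻ⁱ` is divisible by `p` whenever `x ≡ y (mod p)`, two
elements whose iterates `δ^[i]`, `i < m`, agree modulo `p` are congruent modulo `p ^ m`. As the
`a α` are pairwise incongruent modulo `p ^ m`, the rows of `W` modulo `p` are the evaluations of
the monomials of degree `< p` in each variable at the points of `(ZMod p) ^ m`, each point
occurring exactly once. Up to permutations of rows and columns this evaluation matrix is the
`m`-th Kronecker power of a Vandermonde matrix, so its determinant is nonzero in `ZMod p`.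
-/

open Matrix Function

section FermatQuotient

variable {R : Type*} [CommRing R] {n : ℕ} {δ : R → R}

theorem pow_succ_dvd_sub_of_fermatQuotient (hδ : ∀ x, (n : R) * δ x = x - x ^ n)
    {x y : R} {k : ℕ} (h : (n : R) ∣ x - y) (hk : (n : R) ^ k ∣ x - y)
    (hδk : (n : R) ^ k ∣ δ x - δ y) :
    (n : R) ^ (k + 1) ∣ x - y := by
  have hsplit : x - y =
      n * (δ x - δ y) + (∑ i ∈ Finset.range n, x ^ i * y ^ (n - 1 - i)) * (x - y) := by
    rw [geom_sum₂_mul]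
    linear_combination hδ y - hδ x
  rw [hsplit, pow_succ']
  exact dvd_add (mul_dvd_mul_left _ hδk) (mul_dvd_mul (dvd_geom_sum₂_self h) hk)

theorem pow_dvd_sub_of_dvd_sub_iterate (hδ : ∀ x, (n : R) * δ x = x - x ^ n) (j : ℕ) {x y : R}
    (h : ∀ i < j, (n : R) ∣ δ^[i] x - δ^[i] y) : (n : R) ^ j ∣ x - y := by
  induction j generalizing x y with
  | zero => simp
  | succ j ih =>
    refine pow_succ_dvd_sub_of_fermatQuotient hδ (h 0 j.succ_pos) (ih fun i hi ↦ h i (by omega))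
      (ih fun i hi ↦ ?_)
    simpa only [iterate_succ_apply] using h (i + 1) (by omega)

end FermatQuotient

section GridVandermonde

variable {R : Type*} [CommRing R] {n : ℕ}

def gridVandermonde (c : Fin n → R) (m : ℕ) : Matrix (Fin m → Fin n) (Fin m → Fin n) R :=
  of fun v β ↦ ∏ i, c (v i) ^ (β i : ℕ)

theorem gridVandermonde_succ (c : Fin n → R) (m : ℕ) :
    gridVandermonde c (m + 1) =
      (kroneckerMap (· * ·) (vandermonde c) (gridVandermonde c m)).submatrix
        (Fin.consEquiv fun _ ↦ Fin n).symm (Fin.consEquiv fun _ ↦ Fin n).symm := by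
  ext v β
  simp only [gridVandermonde, of_apply, Fin.prod_univ_succ]
  rfl

theorem det_gridVandermonde_ne_zero [IsDomain R] {c : Fin n → R} (hc : Injective c) (m : ℕ) :
    (gridVandermonde c m).det ≠ 0 := by
  induction m with
  | zero => simp [gridVandermonde, det_unique]
  | succ m ih =>
    rw [gridVandermonde_succ, det_submatrix_equiv_self, det_kronecker]
    exact mul_ne_zero (pow_ne_zero _ (det_vandermonde_ne_zero_iff.mpr hc)) (pow_ne_zero _ ih)

theorem det_eval_monomials_ne_zero [IsDomain R] [Fintype R] (hn : Fintype.card R = n)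
    {ι : Type*} [Fintype ι] [DecidableEq ι] {m : ℕ} {x : ι → Fin m → R} (hx : Bijective x)
    (e : ι ≃ (Fin m → Fin n)) :
    (of fun α β ↦ ∏ i, x α i ^ (e β i : ℕ)).det ≠ 0 := by
  set c := Fintype.equivFinOfCardEq hn
  set r := (Equiv.ofBijective x hx).trans (Equiv.piCongrRight fun _ ↦ c)
  have hmatrix : (of fun α β ↦ ∏ i, x α i ^ (e β i : ℕ)) =
      reindex r.symm e.symm (gridVandermonde c.symm m) := by
    ext α β
    simp [r, gridVandermonde]
  rw [hmatrix, det_reindex]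
  exact mul_ne_zero ((Units.isUnit _).map (Int.castRingHom R)).ne_zero
    (det_gridVandermonde_ne_zero c.symm.injective m)

end GridVandermonde

namespace PadicInt

variable {p : ℕ} [Fact p.Prime]

theorem toZMod_eq_iff_dvd_sub {x y : ℤ_[p]} :
    toZMod x = toZMod y ↔ (p : ℤ_[p]) ∣ x - y := by
  rw [← sub_eq_zero, ← map_sub, ← RingHom.mem_ker, ker_toZMod, maximalIdeal_eq_span_p,
    Ideal.mem_span_singleton]

theorem toZModPow_eq_iff_pow_dvd_sub {n : ℕ} {x y : ℤ_[p]} :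
    toZModPow n x = toZModPow n y ↔ (p : ℤ_[p]) ^ n ∣ x - y := by
  rw [← sub_eq_zero, ← map_sub, ← RingHom.mem_ker, ker_toZModPow, Ideal.mem_span_singleton]

theorem isUnit_of_toZMod_ne_zero {x : ℤ_[p]} (hx : toZMod x ≠ 0) : IsUnit x := by
  by_contra hu
  exact hx <| by rwa [← RingHom.mem_ker, ker_toZMod, IsLocalRing.mem_maximalIdeal]

end PadicInt

theorem det_of_matrix_associated_to_p_pow_m_isUnit_general (p : ℕ) [Fact p.Prime]
    (δ : ℤ_[p] → ℤ_[p]) (hδ : ∀ x : ℤ_[p], (p : ℤ_[p]) * δ x = x - x ^ p)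
    (m : ℕ) (a : Fin (p ^ m) → ℤ_[p])
    (hind : ∀ α : Fin (p ^ m),
      PadicInt.toZModPow m (a α) = ((α : ℕ) : ZMod (p ^ m)))
    (e : Fin (p ^ m) ≃ (Fin m → Fin p)) :
    IsUnit (Matrix.det
      (Matrix.of fun α α' : Fin (p ^ m) =>
        ∏ i : Fin m, (δ^[(i : ℕ)] (a α)) ^ ((e α' i : ℕ)))) := by
  set x : Fin (p ^ m) → Fin m → ZMod p := fun α i ↦ PadicInt.toZMod (δ^[i] (a α))
  have hx_inj : Injective x := by
    intro α α' hαα'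
    have hdvd : (p : ℤ_[p]) ^ m ∣ a α - a α' :=
      pow_dvd_sub_of_dvd_sub_iterate hδ m fun i hi ↦
        PadicInt.toZMod_eq_iff_dvd_sub.mp (congrFun hαα' ⟨i, hi⟩)
    have hcast := PadicInt.toZModPow_eq_iff_pow_dvd_sub.mpr hdvd
    rw [hind, hind, ZMod.natCast_eq_natCast_iff', Nat.mod_eq_of_lt α.isLt,
      Nat.mod_eq_of_lt α'.isLt] at hcast
    exact Fin.ext hcast
  have hx : Bijective x := (Fintype.bijective_iff_injective_and_card x).mpr ⟨hx_inj, by simp⟩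
  apply PadicInt.isUnit_of_toZMod_ne_zero
  rw [RingHom.map_det]
  convert det_eval_monomials_ne_zero (ZMod.card p) hx e
  ext α β
  simp [x]

/-- Let `C_m = {a_0, ..., a_{p^m-1}}` be the set of roots of `δ^m` in `ℤ_[p]`,
indexed so that `a_α ≡ α (mod p^m)`. The matrix `W` with entries
`w_{αβ} = (a_α)^{β_0} (δ a_α)^{β_1} ⋯ (δ^{m-1} a_α)^{β_{m-1}}`, columns indexed
by `β ∈ {0,...,p-1}^m` via a bijection `e`, has determinant a unit in `ℤ_[p]`. -/
theorem det_of_matrix_associated_to_p_pow_m_isUnit (p : ℕ) [Fact p.Prime]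
    (δ : ℤ_[p] → ℤ_[p]) (hδ : ∀ x : ℤ_[p], (p : ℤ_[p]) * δ x = x - x ^ p)
    (m : ℕ) (hm : 1 ≤ m) (a : Fin (p ^ m) → ℤ_[p])
    (ha : ∀ α : Fin (p ^ m), δ^[m] (a α) = 0)
    (hind : ∀ α : Fin (p ^ m),
      PadicInt.toZModPow m (a α) = ((α : ℕ) : ZMod (p ^ m)))
    (e : Fin (p ^ m) ≃ (Fin m → Fin p)) :
    IsUnit (Matrix.det
      (Matrix.of fun α α' : Fin (p ^ m) =>
        ∏ i : Fin m, (δ^[(i : ℕ)] (a α)) ^ ((e α' i : ℕ)))) :=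
  det_of_matrix_associated_to_p_pow_m_isUnit_general p δ hδ m a hind e
end

section
/- Every arithmetic differential operator f : Z_p → Z_p of order m is an analytic function of level m; i.e., if f(a) = F(a, δa, ..., δ^m a) for a restricted power series F ∈ Z_p[[x_0,...,x_m]], then for every a ∈ Z_p there is a restricted power series F_a ∈ Z_p[[x]] with f(a + p^m u) = F_a(u) for all u ∈ Z_p. -/
open Filter

variable {p : ℕ} [Fact p.Prime]

/-- A multivariate power series over `ℤ_[p]` is restricted if its coefficients
tend to `0` `p`-adically as the total degree of the index tends to infinity
(equivalently, along the cofinite filter on indices). -/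
def MvRestricted {k : ℕ} (F : MvPowerSeries (Fin k) ℤ_[p]) : Prop :=
  Tendsto (fun α : Fin k →₀ ℕ => MvPowerSeries.coeff α F) cofinite (nhds 0)

/-- Evaluation of a (restricted) multivariate power series at a tuple of
`p`-adic integers. -/
noncomputable def mvEval {k : ℕ} (F : MvPowerSeries (Fin k) ℤ_[p])
    (x : Fin k → ℤ_[p]) : ℤ_[p] :=
  ∑' α : Fin k →₀ ℕ, MvPowerSeries.coeff α F * ∏ i : Fin k, x i ^ α i

/-- A one-variable power series over `ℤ_[p]` is restricted if its
coefficients tend to `0` `p`-adically. -/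
def PRestricted (F : PowerSeries ℤ_[p]) : Prop :=
  Tendsto (fun n : ℕ => PowerSeries.coeff n F) atTop (nhds 0)

/-- Evaluation of a (restricted) one-variable power series at a `p`-adic
integer. -/
noncomputable def pEval (F : PowerSeries ℤ_[p]) (u : ℤ_[p]) : ℤ_[p] :=
  ∑' n : ℕ, PowerSeries.coeff n F * u ^ n

/-- `f` is an arithmetic differential operator of order `m` (relative to the
Fermat quotient operator `δ`) if it is given by a restricted power series in
`a, δa, ..., δ^m a`. -/
def IsADO (δ : ℤ_[p] → ℤ_[p]) (m : ℕ) (f : ℤ_[p] → ℤ_[p]) : Prop :=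
  ∃ F : MvPowerSeries (Fin (m + 1)) ℤ_[p], MvRestricted F ∧
    ∀ a : ℤ_[p], f a = mvEval F (fun i : Fin (m + 1) => δ^[(i : ℕ)] a)

/-- `f` is analytic of level `m` if on every disc `a + p^m ℤ_[p]` it is given
by a restricted power series in `u`, where `x = a + p^m u`. -/
def IsAnalyticLevel (m : ℕ) (f : ℤ_[p] → ℤ_[p]) : Prop :=
  ∀ a : ℤ_[p], ∃ F : PowerSeries ℤ_[p], PRestricted F ∧
    ∀ u : ℤ_[p], f (a + (p : ℤ_[p]) ^ m * u) = pEval F u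

/-!
If `x = c + p^(k+1) q` then `x^p ≡ c^p` modulo `p^(k+2)`, so in `δ x = (x - x^p)/p` the
division by `p` costs only one power of `p`. By induction,
`δ^i (a + p^m u) = δ^i a + p^(m-i) Q_i(u)` for polynomials `Q_i` over `ℤ_[p]`, so on the disc
`a + p^m ℤ_[p]` every argument of `F` is a polynomial `R_i(u)`. Substituting them into `F`,
each monomial becomes a polynomial in `u`; since the coefficients of `F` tend to `0`, the
coefficient of `u^n` converges, tends to `0` with `n`, and the double sum may be rearranged
(ultrametric summability).
-/

open Topology Polynomial

theorem pow_succ_dvd_pow_sub_pow_of_pow_dvd_sub {R : Type*} [CommRing R] {n k : ℕ} {a b : R}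
    (hk : 1 ≤ k) (h : (n : R) ^ k ∣ a - b) : (n : R) ^ (k + 1) ∣ a ^ n - b ^ n := by
  rw [← geom_sum₂_mul, pow_succ']
  exact mul_dvd_mul (dvd_geom_sum₂_self ((dvd_pow_self _ (by omega)).trans h)) h

section FermatQuotient

variable {δ : ℤ_[p] → ℤ_[p]}

theorem exists_delta_add_pow_succ_mul_eval (hδ : ∀ x : ℤ_[p], (p : ℤ_[p]) * δ x = x - x ^ p)
    (c : ℤ_[p]) (k : ℕ) (Q : ℤ_[p][X]) :
    ∃ Q' : ℤ_[p][X], ∀ u : ℤ_[p],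
      δ (c + (p : ℤ_[p]) ^ (k + 1) * Q.eval u) = δ c + (p : ℤ_[p]) ^ k * Q'.eval u := by
  obtain ⟨W, hW⟩ : (p : ℤ_[p][X]) ^ (k + 1 + 1) ∣
      (C c + (p : ℤ_[p][X]) ^ (k + 1) * Q) ^ p - C c ^ p :=
    pow_succ_dvd_pow_sub_pow_of_pow_dvd_sub (by omega) (by simp)
  have hp : (p : ℤ_[p]) ≠ 0 := Nat.cast_ne_zero.mpr (Fact.out : p.Prime).ne_zero
  refine ⟨Q - p * W, fun u => mul_left_cancel₀ hp ?_⟩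
  have hWu := congrArg (eval u) hW
  simp only [eval_sub, eval_pow, eval_add, eval_mul, eval_C, eval_natCast] at hWu
  simp only [hδ, eval_sub, eval_mul, eval_natCast]
  linear_combination -hδ c - hWu

theorem exists_iterate_delta_add_pow_mul (hδ : ∀ x : ℤ_[p], (p : ℤ_[p]) * δ x = x - x ^ p)
    (a : ℤ_[p]) (i j : ℕ) :
    ∃ Q : ℤ_[p][X], ∀ u : ℤ_[p],
      δ^[i] (a + (p : ℤ_[p]) ^ (i + j) * u) = δ^[i] a + (p : ℤ_[p]) ^ j * Q.eval u := by
  induction i generalizing j with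
  | zero => exact ⟨X, by simp⟩
  | succ i ih =>
    obtain ⟨Q, hQ⟩ := ih (j + 1)
    obtain ⟨Q', hQ'⟩ := exists_delta_add_pow_succ_mul_eval hδ (δ^[i] a) j Q
    refine ⟨Q', fun u => ?_⟩
    rw [Function.iterate_succ_apply', Function.iterate_succ_apply', ← hQ', ← hQ,
      Nat.succ_add_eq_add_succ]

theorem exists_polynomial_iterate_delta_add_pow_mul
    (hδ : ∀ x : ℤ_[p], (p : ℤ_[p]) * δ x = x - x ^ p) (a : ℤ_[p]) {i m : ℕ}
    (hi : i ≤ m) :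
    ∃ R : ℤ_[p][X], ∀ u : ℤ_[p], δ^[i] (a + (p : ℤ_[p]) ^ m * u) = R.eval u := by
  obtain ⟨j, rfl⟩ := Nat.exists_eq_add_of_le hi
  obtain ⟨Q, hQ⟩ := exists_iterate_delta_add_pow_mul hδ a i j
  exact ⟨C (δ^[i] a) + C ((p : ℤ_[p]) ^ j) * Q, fun u => by simp [hQ]⟩

end FermatQuotient

theorem tendsto_tsum_apply_snd_of_tendsto_cofinite {E ι κ : Type*} [NormedAddCommGroup E]
    [IsUltrametricDist E] {g : ι × κ → E} (hg : Tendsto g cofinite (𝓝 0)) :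
    Tendsto (fun n => ∑' α, g (α, n)) cofinite (𝓝 0) := by
  rw [Metric.nhds_basis_closedBall.tendsto_right_iff] at hg ⊢
  intro ε hε
  refine ((hg ε hε).image Prod.snd).subset fun n hn => ?_
  by_contra hn'
  refine hn (mem_closedBall_zero_iff.mpr (IsUltrametricDist.norm_tsum_le_of_forall_le_of_nonneg
    hε.le fun α => ?_))
  exact mem_closedBall_zero_iff.mp (not_not.mp fun hα => hn' ⟨(α, n), hα, rfl⟩)

theorem PadicInt.norm_mul_le_norm_left (x y : ℤ_[p]) : ‖x * y‖ ≤ ‖x‖ :=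
  (norm_mul_le x y).trans (mul_le_of_le_one_right (norm_nonneg x) (PadicInt.norm_le_one y))

section RestrictedSums

variable {ι : Type*} {c : ι → ℤ_[p]} {b : ι → ℕ → ℤ_[p]}

theorem tendsto_mul_cofinite_of_eq_zero_of_lt (hc : Tendsto c cofinite (𝓝 0)) (D : ι → ℕ)
    (hb : ∀ α n, D α < n → b α n = 0) :
    Tendsto (fun x : ι × ℕ => c x.1 * b x.1 x.2) cofinite (𝓝 0) := by
  rw [Metric.nhds_basis_closedBall.tendsto_right_iff] at hc ⊢
  intro ε hε
  have hS : {α | ¬ ‖c α‖ ≤ ε}.Finite := by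
    simpa only [mem_closedBall_zero_iff] using eventually_cofinite.mp (hc ε hε)
  simp only [mem_closedBall_zero_iff, eventually_cofinite]
  refine (hS.prod (Set.finite_Iic (hS.toFinset.sup D))).subset ?_
  rintro ⟨α, n⟩ hαn
  have hα : ¬ ‖c α‖ ≤ ε := fun h => hαn ((PadicInt.norm_mul_le_norm_left _ _).trans h)
  refine ⟨hα, Set.mem_Iic.mpr
    ((not_lt.mp fun hn => hαn ?_).trans (Finset.le_sup (hS.mem_toFinset.mpr hα)))⟩
  simpa [hb α n hn] using hε.le

theorem tsum_mul_tsum_eq_tsum_tsum_of_eq_zero_of_lt (hc : Tendsto c cofinite (𝓝 0))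
    (D : ι → ℕ) (hb : ∀ α n, D α < n → b α n = 0) :
    ∑' α, c α * ∑' n, b α n = ∑' n, ∑' α, c α * b α n := by
  have hbα (α : ι) : Summable (b α) := summable_of_ne_finset_zero (s := Finset.range (D α + 1))
    fun n hn => hb α n (by simpa using hn)
  calc ∑' α, c α * ∑' n, b α n = ∑' α, ∑' n, c α * b α n :=
        tsum_congr fun α => ((hbα α).tsum_mul_left _).symm
    _ = ∑' n, ∑' α, c α * b α n :=
        (NonarchimedeanAddGroup.summable_of_tendsto_cofinite_zero
          (tendsto_mul_cofinite_of_eq_zero_of_lt hc D hb)).tsum_comm.symm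

end RestrictedSums

theorem Polynomial.tsum_coeff_mul_pow {R : Type*} [CommSemiring R] [TopologicalSpace R]
    (P : R[X]) (u : R) : ∑' n, P.coeff n * u ^ n = P.eval u := by
  rw [tsum_eq_sum (s := Finset.range (P.natDegree + 1)), eval_eq_sum_range]
  intro n hn
  rw [coeff_eq_zero_of_natDegree_lt (by simpa using hn), zero_mul]

section Substitution

variable {k : ℕ} {F : MvPowerSeries (Fin k) ℤ_[p]}

/-- The power series `F (R₀, …, R_{k-1})`; its coefficient sums converge when `F` is
restricted. -/
noncomputable def substPolynomials (F : MvPowerSeries (Fin k) ℤ_[p]) (R : Fin k → ℤ_[p][X]) :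
    PowerSeries ℤ_[p] :=
  PowerSeries.mk fun n => ∑' α, MvPowerSeries.coeff α F * (∏ i, R i ^ α i).coeff n

theorem MvRestricted.tendsto_coeff_mul_coeff_prod_pow (hF : MvRestricted F)
    (R : Fin k → ℤ_[p][X]) :
    Tendsto (fun x : (Fin k →₀ ℕ) × ℕ =>
      MvPowerSeries.coeff x.1 F * (∏ i, R i ^ x.1 i).coeff x.2) cofinite (𝓝 0) :=
  tendsto_mul_cofinite_of_eq_zero_of_lt (c := fun α => MvPowerSeries.coeff α F)
    (b := fun α n => (∏ i, R i ^ α i).coeff n) hF _ fun _ _ => coeff_eq_zero_of_natDegree_lt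

theorem MvRestricted.pRestricted_substPolynomials (hF : MvRestricted F) (R : Fin k → ℤ_[p][X]) :
    PRestricted (substPolynomials F R) := by
  simpa only [PRestricted, substPolynomials, PowerSeries.coeff_mk, Nat.cofinite_eq_atTop] using
    tendsto_tsum_apply_snd_of_tendsto_cofinite (hF.tendsto_coeff_mul_coeff_prod_pow R)

theorem MvRestricted.mvEval_eval_eq_pEval_substPolynomials (hF : MvRestricted F)
    (R : Fin k → ℤ_[p][X]) (u : ℤ_[p]) :
    mvEval F (fun i => (R i).eval u) = pEval (substPolynomials F R) u := by
  have hslice (n : ℕ) :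
      Summable fun α => MvPowerSeries.coeff α F * (∏ i, R i ^ α i).coeff n := by
    have h := (hF.tendsto_coeff_mul_coeff_prod_pow R).comp
      (Prod.mk_left_injective n).tendsto_cofinite
    exact NonarchimedeanAddGroup.summable_of_tendsto_cofinite_zero h
  calc mvEval F (fun i => (R i).eval u)
      = ∑' α, MvPowerSeries.coeff α F * ∑' n, (∏ i, R i ^ α i).coeff n * u ^ n := by
        simp only [mvEval, tsum_coeff_mul_pow, eval_prod, eval_pow]
    _ = ∑' n, ∑' α, MvPowerSeries.coeff α F * ((∏ i, R i ^ α i).coeff n * u ^ n) :=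
        tsum_mul_tsum_eq_tsum_tsum_of_eq_zero_of_lt (c := fun α => MvPowerSeries.coeff α F)
          (b := fun α n => (∏ i, R i ^ α i).coeff n * u ^ n) hF
          (fun α => (∏ i, R i ^ α i).natDegree)
          fun _ _ hn => by rw [coeff_eq_zero_of_natDegree_lt hn, zero_mul]
    _ = pEval (substPolynomials F R) u := by
        refine tsum_congr fun n => ?_
        rw [substPolynomials, PowerSeries.coeff_mk, ← (hslice n).tsum_mul_right]
        exact tsum_congr fun α => (mul_assoc _ _ _).symm

end Substitution

/-- Every arithmetic differential operator of order `m` is an analytic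
function of level `m`. -/
theorem ado_is_analytic (p : ℕ) [Fact p.Prime]
    (δ : ℤ_[p] → ℤ_[p]) (hδ : ∀ x : ℤ_[p], (p : ℤ_[p]) * δ x = x - x ^ p)
    (m : ℕ) (f : ℤ_[p] → ℤ_[p]) (hf : IsADO δ m f) :
    IsAnalyticLevel m f := by
  obtain ⟨F, hF, hfF⟩ := hf
  intro a
  choose R hR using fun i : Fin (m + 1) =>
    exists_polynomial_iterate_delta_add_pow_mul hδ a (Nat.lt_succ_iff.mp i.isLt)
  refine ⟨substPolynomials F R, hF.pRestricted_substPolynomials R, fun u => ?_⟩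
  rw [hfF, ← hF.mvEval_eval_eq_pEval_substPolynomials]
  simp only [hR]
end

section
/- If f, g : Z_p → Z_p are arithmetic differential operators of orders m and n respectively, then the composition f ∘ g is an arithmetic differential operator of order m + n. -/
open Filter

variable {p : ℕ} [Fact p.Prime]

/-!
Let `A_k` be the set of functions `a ↦ ∑ᵢ cᵢ · (a, δa, …, δᵏa) ^ μᵢ` with `cᵢ → 0`, the exponents
`μᵢ` being allowed to repeat. It is a subring of `ℤ_[p] → ℤ_[p]`, closed under restricted
combinations `∑ₓ cₓ uₓ`, and collecting equal exponents identifies it with the arithmetic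
differential operators of order `k`. The key point is `δ ∘ A_k ⊆ A_{k+1}`. For monomials this
follows from `δ (x y) = x ^ p δy + y ^ p δx + p δx δy`. For a series `h = ∑ᵢ cᵢ Mᵢ` with partial
sums `S_N`, continuity of `δ` gives `δ ∘ h = ∑_N (δ ∘ S_{N+1} - δ ∘ S_N)`, and by
`δ (x + y) = δx + δy - x y · carry(x, y)` each increment is `c_N U_N + δ(c_N) V_N` with
`U_N, V_N ∈ A_{k+1}` and `δ(c_N) → 0`. Hence `δ^[i] ∘ g ∈ A_{n+i}`, and
`f ∘ g = ∑_α F_α ∏ᵢ (δ^[i] ∘ g) ^ αᵢ ∈ A_{m+n}`.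
-/

open Topology

section PDerivation

variable {R : Type*} [CommRing R] {p : ℕ} {δ : R → R}

/-- The polynomial with `(x + y) ^ p = x ^ p + y ^ p + p * x * y * addPowCarry p x y` for prime `p`
(`add_pow_prime_eq`). -/
def addPowCarry (p : ℕ) (x y : R) : R :=
  ∑ k ∈ Finset.Ioo 0 p, x ^ (k - 1) * y ^ (p - k - 1) * ((p.choose k / p : ℕ) : R)

lemma map_addPowCarry {S : Type*} [CommRing S] (f : R →+* S) (x y : R) :
    f (addPowCarry p x y) = addPowCarry p (f x) (f y) := by
  simp [addPowCarry]

lemma addPowCarry_apply {X : Type*} (u v : X → R) (a : X) :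
    addPowCarry p u v a = addPowCarry p (u a) (v a) :=
  map_addPowCarry (Pi.evalRingHom (fun _ => R) a) u v

lemma addPowCarry_mem {s : Subring R} {x y : R} (hx : x ∈ s) (hy : y ∈ s) :
    addPowCarry p x y ∈ s :=
  sum_mem fun _ _ => mul_mem (mul_mem (pow_mem hx _) (pow_mem hy _)) (natCast_mem s _)

variable [IsDomain R] [CharZero R]

lemma delta_eq_zero_of_pow_eq (hp : p ≠ 0) (hδ : ∀ x, (p : R) * δ x = x - x ^ p) {x : R}
    (hx : x ^ p = x) : δ x = 0 :=
  mul_left_cancel₀ (Nat.cast_ne_zero.2 hp) (by rw [hδ, hx, sub_self, mul_zero])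

lemma delta_add (hp : p.Prime) (hδ : ∀ x, (p : R) * δ x = x - x ^ p) (x y : R) :
    δ (x + y) = δ x + δ y - x * y * addPowCarry p x y := by
  refine mul_left_cancel₀ (Nat.cast_ne_zero.2 hp.ne_zero) ?_
  rw [mul_sub, mul_add, hδ, hδ, hδ, add_pow_prime_eq hp, addPowCarry]
  ring

lemma delta_mul (hp : p ≠ 0) (hδ : ∀ x, (p : R) * δ x = x - x ^ p) (x y : R) :
    δ (x * y) = x ^ p * δ y + y ^ p * δ x + p * δ x * δ y := by
  refine mul_left_cancel₀ (Nat.cast_ne_zero.2 hp) ?_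
  linear_combination hδ (x * y) - x ^ p * hδ y - (y ^ p + p * δ y) * hδ x - (x - x ^ p) * hδ y

lemma delta_add_mul_sub_delta (hp : p.Prime) (hδ : ∀ x, (p : R) * δ x = x - x ^ p)
    (s c m : R) :
    δ (s + c * m) - δ s =
      c * (c ^ (p - 1) * δ m - s * m * addPowCarry p s (c * m)) + δ c * (m ^ p + p * δ m) := by
  have hc : c ^ p = c * c ^ (p - 1) := by rw [← pow_succ', Nat.sub_add_cancel hp.one_le]
  rw [delta_add hp hδ, delta_mul hp.ne_zero hδ, hc]
  ring

end PDerivation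

lemma hasSum_sub_of_tendsto {G : Type*} [AddCommGroup G] [UniformSpace G] [IsUniformAddGroup G]
    [NonarchimedeanAddGroup G] [CompleteSpace G] [T2Space G] {s : ℕ → G} {L : G}
    (hs : Tendsto s atTop (𝓝 L)) : HasSum (fun n => s (n + 1) - s n) (L - s 0) := by
  have hsum : Summable fun n => s (n + 1) - s n := by
    refine NonarchimedeanAddGroup.summable_of_tendsto_cofinite_zero ?_
    rw [Nat.cofinite_eq_atTop]
    simpa using (hs.comp (tendsto_add_atTop_nat 1)).sub hs
  rw [hsum.hasSum_iff_tendsto_nat]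
  simpa only [Finset.sum_range_sub] using hs.sub_const (s 0)

lemma tendsto_tsum_fiber_cofinite {ι κ G : Type*} [NormedAddCommGroup G] [IsUltrametricDist G]
    (μ : ι → κ) {c : ι → G} (hc : Tendsto c cofinite (𝓝 0)) :
    Tendsto (fun β => ∑' i : {i // μ i = β}, c i) cofinite (𝓝 0) := by
  rw [Metric.nhds_basis_closedBall.tendsto_right_iff] at hc ⊢
  intro ε hε
  have hfin := (hc ε hε)
  rw [eventually_cofinite] at hfin ⊢
  refine (hfin.image μ).subset fun β hβ => ?_
  by_contra hβ'
  refine hβ (mem_closedBall_zero_iff.2 ?_)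
  refine IsUltrametricDist.norm_tsum_le_of_forall_le_of_nonneg hε.le fun i => ?_
  by_contra hi
  exact hβ' ⟨i, by simpa using hi, i.2⟩

namespace PadicInt

lemma lipschitzWith_of_mul_eq_sub_pow {δ : ℤ_[p] → ℤ_[p]}
    (hδ : ∀ x, (p : ℤ_[p]) * δ x = x - x ^ p) : LipschitzWith p δ := by
  refine LipschitzWith.of_dist_le_mul fun x y => ?_
  obtain ⟨r, hr⟩ := sub_dvd_pow_sub_pow x y p
  have hp : (0 : ℝ) < p := by exact_mod_cast (Fact.out : p.Prime).pos
  have key : ‖δ x - δ y‖ = p * (‖x - y‖ * ‖1 - r‖) := by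
    have h := congrArg norm (show (p : ℤ_[p]) * (δ x - δ y) = (x - y) * (1 - r) by
      rw [mul_sub, hδ, hδ]; linear_combination -hr)
    rw [norm_mul, norm_mul, norm_p] at h
    rw [← h]
    field_simp
  rw [dist_eq_norm, dist_eq_norm, key, NNReal.coe_natCast]
  exact mul_le_mul_of_nonneg_left (mul_le_of_le_one_right (norm_nonneg _) (norm_le_one _)) hp.le

lemma summable_mul_of_tendsto_zero {ι : Type*} {c : ι → ℤ_[p]} (hc : Tendsto c cofinite (𝓝 0))
    (v : ι → ℤ_[p]) : Summable fun i => c i * v i :=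
  NonarchimedeanAddGroup.summable_of_tendsto_cofinite_zero
    (hc.zero_mul_isBoundedUnder_le (isBoundedUnder_of ⟨1, fun _ => norm_le_one _⟩))

lemma tendsto_prod_mul_cofinite {κ ι : Type*} {c : κ → ℤ_[p]} {d : κ → ι → ℤ_[p]}
    (hc : Tendsto c cofinite (𝓝 0)) (hd : ∀ x, Tendsto (d x) cofinite (𝓝 0)) :
    Tendsto (fun i : κ × ι => c i.1 * d i.1 i.2) cofinite (𝓝 0) := by
  simp only [NormedAddGroup.tendsto_nhds_zero, eventually_cofinite, not_lt] at hc hd ⊢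
  intro ε hε
  refine ((hc ε hε).biUnion fun x _ => (Set.finite_singleton x).prod (hd x ε hε)).subset ?_
  rintro ⟨x, i⟩ hxi
  simp only [Set.mem_ofPred_eq, norm_mul] at hxi
  refine Set.mem_biUnion (x := x) ?_ ⟨rfl, ?_⟩
  · exact hxi.trans (mul_le_of_le_one_right (norm_nonneg _) (norm_le_one _))
  · exact hxi.trans (mul_le_of_le_one_left (norm_nonneg _) (norm_le_one _))

end PadicInt

open PadicInt

section JetSeries

variable {δ : ℤ_[p] → ℤ_[p]} {k : ℕ}

noncomputable def jetMonomial (δ : ℤ_[p] → ℤ_[p]) {k : ℕ} (α : Fin (k + 1) →₀ ℕ)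
    (a : ℤ_[p]) : ℤ_[p] :=
  α.prod fun j e => δ^[j] a ^ e

lemma jetMonomial_eq_prod (α : Fin (k + 1) →₀ ℕ) (a : ℤ_[p]) :
    jetMonomial δ α a = ∏ j : Fin (k + 1), δ^[j] a ^ α j :=
  Finsupp.prod_fintype _ _ fun _ => pow_zero _

lemma jetMonomial_zero : jetMonomial δ (0 : Fin (k + 1) →₀ ℕ) = 1 :=
  funext fun _ => Finsupp.prod_zero_index

lemma jetMonomial_add (α β : Fin (k + 1) →₀ ℕ) :
    jetMonomial δ (α + β) = jetMonomial δ α * jetMonomial δ β :=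
  funext fun _ => Finsupp.prod_add_index' (fun _ => pow_zero _) fun _ _ _ => pow_add _ _ _

/-- Unlike in `IsADO`, the exponents `μ i` may repeat, which makes closure under products and
restricted sums easy; `isADO_iff_mem_jetSeries` collects equal exponents. -/
def IsJetSeries (δ : ℤ_[p] → ℤ_[p]) (k : ℕ) (h : ℤ_[p] → ℤ_[p]) : Prop :=
  ∃ (c : ℕ → ℤ_[p]) (μ : ℕ → Fin (k + 1) →₀ ℕ), Tendsto c cofinite (𝓝 0) ∧
    ∀ a, HasSum (fun i => c i * jetMonomial δ (μ i) a) (h a)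

namespace IsJetSeries

lemma of_hasSum {ι : Type*} [Countable ι] {c : ι → ℤ_[p]} {μ : ι → Fin (k + 1) →₀ ℕ}
    {h : ℤ_[p] → ℤ_[p]} (hc : Tendsto c cofinite (𝓝 0))
    (hs : ∀ a, HasSum (fun i => c i * jetMonomial δ (μ i) a) (h a)) : IsJetSeries δ k h := by
  obtain ⟨e, he⟩ := Countable.exists_injective_nat ι
  refine ⟨Function.extend e c 0, Function.extend e μ 0, ?_, fun a => ?_⟩
  · rw [← NonarchimedeanAddGroup.summable_iff_tendsto_cofinite_zero] at hc ⊢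
    exact ((hasSum_extend_zero he).2 hc.hasSum).summable
  · convert (hasSum_extend_zero he).2 (hs a) using 1
    funext n
    by_cases hn : ∃ i, e i = n
    · obtain ⟨i, rfl⟩ := hn
      simp only [he.extend_apply]
    · simp [Function.extend_apply' _ _ _ hn]

lemma tsum_mul {κ : Type*} [Countable κ] {c : κ → ℤ_[p]} (hc : Tendsto c cofinite (𝓝 0))
    {u : κ → ℤ_[p] → ℤ_[p]} (hu : ∀ x, IsJetSeries δ k (u x)) :
    IsJetSeries δ k fun a => ∑' x, c x * u x a := by
  choose d μ hd hs using hu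
  have hcd := tendsto_prod_mul_cofinite hc hd
  refine of_hasSum (μ := fun i : κ × ℕ => μ i.1 i.2) hcd fun a => ?_
  have htot := (summable_mul_of_tendsto_zero hcd fun i => jetMonomial δ (μ i.1 i.2) a).hasSum
  have hfib (x : κ) : HasSum (fun n => c x * d x n * jetMonomial δ (μ x n) a) (c x * u x a) := by
    simpa only [mul_assoc] using (hs x a).mul_left (c x)
  rwa [(htot.prod_fiberwise hfib).tsum_eq]

lemma jetMonomial_mul (β : Fin (k + 1) →₀ ℕ) {h : ℤ_[p] → ℤ_[p]} (hh : IsJetSeries δ k h) :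
    IsJetSeries δ k (jetMonomial δ β * h) := by
  obtain ⟨c, μ, hc, hs⟩ := hh
  refine ⟨c, fun i => β + μ i, hc, fun a => ?_⟩
  simpa only [jetMonomial_add, Pi.mul_apply, mul_left_comm] using
    (hs a).mul_left (jetMonomial δ β a)

lemma const (r : ℤ_[p]) : IsJetSeries δ k fun _ => r := by
  refine of_hasSum (ι := Unit) (c := fun _ => r) (μ := fun _ => 0) ?_ fun a => ?_
  · simp [cofinite_eq_bot]
  · simp [jetMonomial_zero]

lemma mul {h₁ h₂ : ℤ_[p] → ℤ_[p]} (H₁ : IsJetSeries δ k h₁) (H₂ : IsJetSeries δ k h₂) :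
    IsJetSeries δ k (h₁ * h₂) := by
  obtain ⟨c, μ, hc, hs⟩ := H₁
  convert tsum_mul hc fun i => jetMonomial_mul (μ i) H₂ using 1
  funext a
  simpa only [Pi.mul_apply, mul_assoc] using ((hs a).mul_right (h₂ a)).tsum_eq.symm

lemma add {h₁ h₂ : ℤ_[p] → ℤ_[p]} (H₁ : IsJetSeries δ k h₁) (H₂ : IsJetSeries δ k h₂) :
    IsJetSeries δ k (h₁ + h₂) := by
  obtain ⟨c₁, μ₁, hc₁, hs₁⟩ := H₁
  obtain ⟨c₂, μ₂, hc₂, hs₂⟩ := H₂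
  refine of_hasSum (c := Sum.elim c₁ c₂) (μ := Sum.elim μ₁ μ₂) ?_ fun a =>
    HasSum.sum (f := fun i => Sum.elim c₁ c₂ i * jetMonomial δ (Sum.elim μ₁ μ₂ i) a) (hs₁ a) (hs₂ a)
  rw [← NonarchimedeanAddGroup.summable_iff_tendsto_cofinite_zero] at hc₁ hc₂ ⊢
  exact (HasSum.sum (f := Sum.elim c₁ c₂) hc₁.hasSum hc₂.hasSum).summable

lemma neg {h : ℤ_[p] → ℤ_[p]} (hh : IsJetSeries δ k h) : IsJetSeries δ k (-h) := by
  obtain ⟨c, μ, hc, hs⟩ := hh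
  refine ⟨fun i => -c i, μ, by simpa using hc.neg, fun a => ?_⟩
  simpa only [Pi.neg_apply, neg_mul] using (hs a).neg

end IsJetSeries

variable (δ k) in
def jetSeries : Subring (ℤ_[p] → ℤ_[p]) where
  carrier := {h | IsJetSeries δ k h}
  mul_mem' := IsJetSeries.mul
  one_mem' := IsJetSeries.const 1
  add_mem' := IsJetSeries.add
  zero_mem' := IsJetSeries.const 0
  neg_mem' := IsJetSeries.neg

lemma mem_jetSeries {h : ℤ_[p] → ℤ_[p]} : h ∈ jetSeries δ k ↔ IsJetSeries δ k h :=
  Iff.rfl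

lemma const_mem_jetSeries (r : ℤ_[p]) : (fun _ => r) ∈ jetSeries δ k :=
  IsJetSeries.const r

lemma tsum_mul_mem_jetSeries {κ : Type*} [Countable κ] {c : κ → ℤ_[p]}
    (hc : Tendsto c cofinite (𝓝 0)) {u : κ → ℤ_[p] → ℤ_[p]} (hu : ∀ x, u x ∈ jetSeries δ k) :
    (fun a => ∑' x, c x * u x a) ∈ jetSeries δ k :=
  IsJetSeries.tsum_mul hc hu

lemma jetMonomial_mem_jetSeries (α : Fin (k + 1) →₀ ℕ) : jetMonomial δ α ∈ jetSeries δ k := by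
  simpa [mem_jetSeries] using IsJetSeries.jetMonomial_mul α (one_mem (jetSeries δ k))

lemma iterate_mem_jetSeries {t : ℕ} (ht : t ≤ k) : δ^[t] ∈ jetSeries δ k := by
  convert jetMonomial_mem_jetSeries (δ := δ) (Finsupp.single ⟨t, Nat.lt_succ_of_le ht⟩ 1)
  funext a
  simp [jetMonomial, Finsupp.prod_single_index]

lemma jetSeries_mono {k' : ℕ} (hk : k ≤ k') : jetSeries δ k ≤ jetSeries δ k' := by
  rintro h ⟨c, μ, hc, hs⟩
  let e : Fin (k + 1) ↪ Fin (k' + 1) := (Fin.castLEEmb (by omega))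
  refine ⟨c, fun i => (μ i).embDomain e, hc, fun a => ?_⟩
  simpa [jetMonomial, Finsupp.prod_embDomain, e] using hs a

lemma delta_comp_jetMonomial_mem_jetSeries (hδ : ∀ x, (p : ℤ_[p]) * δ x = x - x ^ p)
    (α : Fin (k + 1) →₀ ℕ) : δ ∘ jetMonomial δ α ∈ jetSeries δ (k + 1) := by
  have hp : p ≠ 0 := (Fact.out : p.Prime).ne_zero
  have hα : jetMonomial δ α ∈ Submonoid.closure (Set.range fun j : Fin (k + 1) => δ^[j]) := by
    have : jetMonomial δ α = ∏ j : Fin (k + 1), δ^[j] ^ α j := by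
      funext a; simp [jetMonomial_eq_prod, Finset.prod_apply]
    rw [this]
    exact prod_mem fun j _ => pow_mem (Submonoid.subset_closure (Set.mem_range_self j)) _
  suffices ∀ u ∈ Submonoid.closure (Set.range fun j : Fin (k + 1) => δ^[j]),
      u ∈ jetSeries δ (k + 1) ∧ δ ∘ u ∈ jetSeries δ (k + 1) from (this _ hα).2
  intro u hu
  induction hu using Submonoid.closure_induction with
  | mem u hu =>
    obtain ⟨j, rfl⟩ := hu
    refine ⟨iterate_mem_jetSeries (by omega), ?_⟩
    rw [← Function.iterate_succ']
    exact iterate_mem_jetSeries (by omega)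
  | one =>
    refine ⟨one_mem _, ?_⟩
    have : δ ∘ (1 : ℤ_[p] → ℤ_[p]) = fun _ => 0 :=
      funext fun _ => delta_eq_zero_of_pow_eq hp hδ (one_pow p)
    rw [this]
    exact const_mem_jetSeries 0
  | mul u v _ _ hu hv =>
    refine ⟨mul_mem hu.1 hv.1, ?_⟩
    have : δ ∘ (u * v) =
        u ^ p * (δ ∘ v) + v ^ p * (δ ∘ u) + (p : ℤ_[p] → ℤ_[p]) * (δ ∘ u) * (δ ∘ v) := by
      funext a; simp [delta_mul hp hδ]
    rw [this]
    exact add_mem (add_mem (mul_mem (pow_mem hu.1 p) hv.2) (mul_mem (pow_mem hv.1 p) hu.2))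
      (mul_mem (mul_mem (natCast_mem _ p) hu.2) hv.2)

theorem delta_comp_mem_jetSeries (hδ : ∀ x, (p : ℤ_[p]) * δ x = x - x ^ p) {h : ℤ_[p] → ℤ_[p]}
    (hh : h ∈ jetSeries δ k) : δ ∘ h ∈ jetSeries δ (k + 1) := by
  have hp : p.Prime := Fact.out
  have hδ0 : δ 0 = 0 := delta_eq_zero_of_pow_eq hp.ne_zero hδ (zero_pow hp.ne_zero)
  have hδc := (lipschitzWith_of_mul_eq_sub_pow hδ).continuous
  obtain ⟨c, μ, hc, hs⟩ := hh
  let M (i : ℕ) : ℤ_[p] → ℤ_[p] := jetMonomial δ (μ i)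
  let S (N : ℕ) : ℤ_[p] → ℤ_[p] := ∑ i ∈ Finset.range N, (fun _ => c i) * M i
  let U (N : ℕ) : ℤ_[p] → ℤ_[p] := (fun _ => c N ^ (p - 1)) * (δ ∘ M N) -
    S N * M N * addPowCarry p (S N) ((fun _ => c N) * M N)
  let V (N : ℕ) : ℤ_[p] → ℤ_[p] := M N ^ p + (p : ℤ_[p] → ℤ_[p]) * (δ ∘ M N)
  have hM (N : ℕ) : M N ∈ jetSeries δ (k + 1) :=
    jetSeries_mono k.le_succ (jetMonomial_mem_jetSeries _)
  have hS (N : ℕ) : S N ∈ jetSeries δ (k + 1) :=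
    sum_mem fun i _ => mul_mem (const_mem_jetSeries _) (hM i)
  have hU (N : ℕ) : U N ∈ jetSeries δ (k + 1) :=
    sub_mem (mul_mem (const_mem_jetSeries _) (delta_comp_jetMonomial_mem_jetSeries hδ _))
      (mul_mem (mul_mem (hS N) (hM N))
        (addPowCarry_mem (hS N) (mul_mem (const_mem_jetSeries _) (hM N))))
  have hV (N : ℕ) : V N ∈ jetSeries δ (k + 1) :=
    add_mem (pow_mem (hM N) p)
      (mul_mem (natCast_mem _ p) (delta_comp_jetMonomial_mem_jetSeries hδ _))
  have hdc : Tendsto (fun N => δ (c N)) cofinite (𝓝 0) := hδ0 ▸ (hδc.tendsto 0).comp hc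
  have hstep (a : ℤ_[p]) (N : ℕ) :
      δ (S (N + 1) a) - δ (S N a) = c N * U N a + δ (c N) * V N a := by
    have hS' : S (N + 1) a = S N a + c N * M N a := by
      simp only [S, Finset.sum_range_succ, Pi.add_apply, Pi.mul_apply]
    rw [hS', delta_add_mul_sub_delta hp hδ]
    simp [U, V, addPowCarry_apply]
  have htel (a : ℤ_[p]) : HasSum (fun N => c N * U N a + δ (c N) * V N a) (δ (h a)) := by
    have hlim : Tendsto (fun N => S N a) atTop (𝓝 (h a)) := by
      simpa [S, M, Finset.sum_apply] using (hs a).tendsto_sum_nat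
    simpa [← hstep, S, hδ0] using hasSum_sub_of_tendsto ((hδc.tendsto _).comp hlim)
  convert add_mem (tsum_mul_mem_jetSeries hc hU) (tsum_mul_mem_jetSeries hdc hV) using 1
  funext a
  exact (htel a).unique
    ((summable_mul_of_tendsto_zero hc _).hasSum.add (summable_mul_of_tendsto_zero hdc _).hasSum)

lemma isADO_iff_mem_jetSeries {h : ℤ_[p] → ℤ_[p]} : IsADO δ k h ↔ h ∈ jetSeries δ k := by
  constructor
  · rintro ⟨F, hF, hhF⟩
    convert tsum_mul_mem_jetSeries hF fun α => jetMonomial_mem_jetSeries (δ := δ) α using 1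
    funext a
    simp [hhF, mvEval, jetMonomial_eq_prod]
  · rintro ⟨c, μ, hc, hs⟩
    refine ⟨fun β => ∑' i : {i // μ i = β}, c i, tendsto_tsum_fiber_cofinite μ hc, fun a => ?_⟩
    have hfib (β : Fin (k + 1) →₀ ℕ) :
        HasSum (fun i : {i // μ i = β} => c i * jetMonomial δ (μ i) a)
          ((∑' i : {i // μ i = β}, c i) * jetMonomial δ β a) := by
      have hcβ : Summable fun i : {i // μ i = β} => c i :=
        NonarchimedeanAddGroup.summable_of_tendsto_cofinite_zero
          (hc.comp Subtype.val_injective.tendsto_cofinite)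
      have hμ : (fun i : {i // μ i = β} => c i * jetMonomial δ (μ i) a) =
          fun i : {i // μ i = β} => c i * jetMonomial δ β a := funext fun i => by rw [i.2]
      exact hμ ▸ hcβ.hasSum.mul_right (jetMonomial δ β a)
    have := ((Equiv.sigmaFiberEquiv μ).hasSum_iff.2 (hs a)).sigma hfib
    simp only [jetMonomial_eq_prod] at this
    exact this.tsum_eq.symm

end JetSeries

/-- The composition of arithmetic differential operators of orders `m` and `n`
is an arithmetic differential operator of order `m + n`. -/
theorem ado_comp (p : ℕ) [Fact p.Prime]
    (δ : ℤ_[p] → ℤ_[p]) (hδ : ∀ x : ℤ_[p], (p : ℤ_[p]) * δ x = x - x ^ p)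
    (m n : ℕ) (f g : ℤ_[p] → ℤ_[p])
    (hf : IsADO δ m f) (hg : IsADO δ n g) :
    IsADO δ (m + n) (f ∘ g) := by
  have hiter (i : ℕ) : δ^[i] ∘ g ∈ jetSeries δ (n + i) := by
    induction i with
    | zero => exact isADO_iff_mem_jetSeries.1 hg
    | succ i ih =>
      rw [Function.iterate_succ', Function.comp_assoc]
      exact delta_comp_mem_jetSeries hδ ih
  obtain ⟨F, hF, hfF⟩ := hf
  refine isADO_iff_mem_jetSeries.2 ?_
  convert tsum_mul_mem_jetSeries hF fun α =>
    prod_mem fun (i : Fin (m + 1)) (_ : i ∈ Finset.univ) =>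
      pow_mem (jetSeries_mono (k' := m + n) (by omega) (hiter i)) (α i) using 1
  funext a
  simp [hfF, mvEval, Finset.prod_apply]
end

section
/- If g : Z_p → Z_p is an arithmetic differential operator of order m and c ∈ Z_p, then the translate h(x) := g(x + c) is also an arithmetic differential operator of order m. -/
/-!
Since `p δx = x - x^p` and `p` divides the inner binomial coefficients of `(x + y)^p`,
`δ(x + y) = δx + δy - x y r(x, y)` and `δ(x y) = x δy + y^p δx` with `r` a polynomial. So `δ`
maps polynomials in `a, …, δ^n a` to polynomials in `a, …, δ^(n+1) a`, and each `δ^i (a + c)`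
is a polynomial in `a, δa, …, δ^i a`. Thus `g (a + c)` is a restricted power series composed
with polynomials, which is again a restricted power series: its coefficients are rearrangements
of a double series whose terms tend to `0`, and rearranging is legitimate in the ultrametric
`ℤ_[p]`.
-/

open Filter

variable {p : ℕ} [Fact p.Prime]

section DeltaPolynomial

variable {δ : ℤ_[p] → ℤ_[p]}

theorem delta_eq_iff (hδ : ∀ x : ℤ_[p], (p : ℤ_[p]) * δ x = x - x ^ p) {x y : ℤ_[p]} :
    δ x = y ↔ (p : ℤ_[p]) * y = x - x ^ p :=
  ⟨fun h => h ▸ hδ x, fun h =>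
    mul_left_cancel₀ (Nat.cast_ne_zero.mpr (Fact.out : p.Prime).ne_zero) (by rw [hδ, h])⟩

variable (δ) in
noncomputable def deltaPolyFun (n : ℕ) : Subalgebra ℤ_[p] (ℤ_[p] → ℤ_[p]) :=
  Algebra.adjoin ℤ_[p] (Set.range fun j : Fin (n + 1) => δ^[j])

theorem iterate_mem_deltaPolyFun {j n : ℕ} (h : j ≤ n) : δ^[j] ∈ deltaPolyFun δ n :=
  Algebra.subset_adjoin ⟨⟨j, Nat.lt_succ_of_le h⟩, rfl⟩

theorem deltaPolyFun_mono : Monotone (deltaPolyFun δ) := fun _ _ h =>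
  Algebra.adjoin_mono <| Set.range_subset_iff.mpr fun j => ⟨⟨j, by omega⟩, rfl⟩

theorem comp_mem_deltaPolyFun_succ (hδ : ∀ x : ℤ_[p], (p : ℤ_[p]) * δ x = x - x ^ p) {n : ℕ}
    {f : ℤ_[p] → ℤ_[p]} (hf : f ∈ deltaPolyFun δ n) : δ ∘ f ∈ deltaPolyFun δ (n + 1) := by
  have hle := deltaPolyFun_mono (δ := δ) n.le_succ
  induction hf using Algebra.adjoin_induction with
  | mem _ hf =>
    obtain ⟨j, rfl⟩ := hf
    rw [← Function.iterate_succ']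
    exact iterate_mem_deltaPolyFun (by omega)
  | algebraMap r => exact algebraMap_mem _ (δ r)
  | add f g hf hg hδf hδg =>
    -- Taking `r` in the subalgebra keeps the correction term `f * g * r` inside it.
    obtain ⟨r, hr⟩ := exists_add_pow_prime_eq (Fact.out : p.Prime)
      (⟨f, hle hf⟩ : deltaPolyFun δ (n + 1)) ⟨g, hle hg⟩
    have hr' := fun a => congrArg (fun φ : deltaPolyFun δ (n + 1) => (φ : ℤ_[p] → ℤ_[p]) a) hr
    simp only [AddMemClass.mk_add_mk, SubmonoidClass.mk_pow, Pi.pow_apply, Pi.add_apply,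
      AddMemClass.coe_add, MulMemClass.coe_mul, SubringClass.coe_natCast, Pi.mul_apply,
      Pi.natCast_apply] at hr'
    have hδ_add : δ ∘ (f + g) = δ ∘ f + δ ∘ g - f * g * r := by
      funext a
      simp only [Function.comp_apply, Pi.add_apply, Pi.sub_apply, Pi.mul_apply]
      rw [delta_eq_iff hδ]
      linear_combination hδ (f a) + hδ (g a) + hr' a
    rw [hδ_add]
    exact sub_mem (add_mem hδf hδg) (mul_mem (mul_mem (hle hf) (hle hg)) r.2)
  | mul f g hf hg hδf hδg =>
    have hδ_mul : δ ∘ (f * g) = f * δ ∘ g + g ^ p * δ ∘ f := by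
      funext a
      simp only [Function.comp_apply, Pi.add_apply, Pi.pow_apply, Pi.mul_apply]
      rw [delta_eq_iff hδ]
      linear_combination f a * hδ (g a) + g a ^ p * hδ (f a)
    rw [hδ_mul]
    exact add_mem (mul_mem (hle hf) hδg) (mul_mem (pow_mem (hle hg) p) hδf)

theorem iterate_comp_add_const_mem_deltaPolyFun
    (hδ : ∀ x : ℤ_[p], (p : ℤ_[p]) * δ x = x - x ^ p) (c : ℤ_[p]) (i : ℕ) :
    (fun x => δ^[i] (x + c)) ∈ deltaPolyFun δ i := by
  induction i with
  | zero => exact add_mem (iterate_mem_deltaPolyFun le_rfl) (algebraMap_mem _ c)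
  | succ i ih =>
    simp_rw [Function.iterate_succ_apply']
    exact comp_mem_deltaPolyFun_succ hδ ih

theorem exists_eval_of_mem_deltaPolyFun {n : ℕ} {f : ℤ_[p] → ℤ_[p]}
    (hf : f ∈ deltaPolyFun δ n) :
    ∃ Q : MvPolynomial (Fin (n + 1)) ℤ_[p], ∀ a,
      f a = MvPolynomial.eval (fun j : Fin (n + 1) => δ^[j] a) Q := by
  rw [deltaPolyFun, Algebra.adjoin_range_eq_range_aeval] at hf
  obtain ⟨Q, rfl⟩ := hf
  refine ⟨Q, fun a => ?_⟩
  rw [← MvPolynomial.coe_aeval_eq_eval]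
  exact MvPolynomial.comp_aeval_apply _ (Pi.evalAlgHom ℤ_[p] (fun _ => ℤ_[p]) a) Q

end DeltaPolynomial

section NullFamilies

variable {ι κ : Type*}

theorem tendsto_cofinite_zero_iff {E : Type*} [SeminormedAddCommGroup E] {f : ι → E} :
    Tendsto f cofinite (nhds 0) ↔ ∀ ε > 0, {i | ε ≤ ‖f i‖}.Finite := by
  simp only [NormedAddGroup.tendsto_nhds_zero, eventually_cofinite, not_lt]

theorem tendsto_cofinite_mul_of_finite_support {f : ι → ℤ_[p]}
    (hf : Tendsto f cofinite (nhds 0)) {g : ι → κ → ℤ_[p]} (hg : ∀ i, (g i).support.Finite) :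
    Tendsto (fun q : ι × κ => f q.1 * g q.1 q.2) cofinite (nhds 0) := by
  rw [tendsto_cofinite_zero_iff] at hf ⊢
  intro ε hε
  refine ((hf ε hε).biUnion fun i _ => (Set.finite_singleton i).prod (hg i)).subset ?_
  rintro ⟨i, j⟩ hij
  have hfi : ε ≤ ‖f i‖ :=
    hij.trans <| by
      simpa using mul_le_mul_of_nonneg_left (PadicInt.norm_le_one (g i j)) (norm_nonneg (f i))
  have hgij : g i j ≠ 0 := by
    rintro h
    simp only [Set.mem_ofPred_eq, h, mul_zero, norm_zero] at hij
    exact hij.not_gt hε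
  exact Set.mem_biUnion hfi ⟨rfl, hgij⟩

theorem tendsto_cofinite_tsum_of_tendsto_cofinite_prod {E : Type*} [SeminormedAddCommGroup E]
    [IsUltrametricDist E] {u : ι × κ → E} (hu : Tendsto u cofinite (nhds 0)) :
    Tendsto (fun j => ∑' i, u (i, j)) cofinite (nhds 0) := by
  rw [tendsto_cofinite_zero_iff] at hu ⊢
  intro ε hε
  refine ((hu (ε / 2) (half_pos hε)).image Prod.snd).subset fun j hj => ?_
  by_contra hj'
  have hsmall : ∀ i, ‖u (i, j)‖ ≤ ε / 2 := fun i =>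
    (not_le.mp fun h => hj' ⟨(i, j), h, rfl⟩).le
  exact (half_lt_self hε).not_ge <|
    hj.trans (IsUltrametricDist.norm_tsum_le_of_forall_le_of_nonneg (half_pos hε).le hsmall)

end NullFamilies

open MvPolynomial in
theorem MvPolynomial.eval_eq_tsum {R σ : Type*} [CommSemiring R] [TopologicalSpace R]
    [Fintype σ] (x : σ → R) (Q : MvPolynomial σ R) :
    eval x Q = ∑' β, coeff β Q * ∏ i, x i ^ β i := by
  rw [eval_eq', tsum_eq_sum fun β hβ => by rw [notMem_support_iff.mp hβ, zero_mul]]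

open MvPolynomial in
theorem MvRestricted.exists_mvEval_eq_mvEval_eval {k n : ℕ} {F : MvPowerSeries (Fin k) ℤ_[p]}
    (hF : MvRestricted F) (P : Fin k → MvPolynomial (Fin n) ℤ_[p]) :
    ∃ G : MvPowerSeries (Fin n) ℤ_[p], MvRestricted G ∧
      ∀ x, mvEval G x = mvEval F fun i => eval x (P i) := by
  let Q : (Fin k →₀ ℕ) → MvPolynomial (Fin n) ℤ_[p] := fun α => ∏ i, P i ^ α i
  -- `c (α, β)` is the `β`-coefficient of the `α`-th term `F_α ∏ i, P i ^ α i` of the composite.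
  let c : (Fin k →₀ ℕ) × (Fin n →₀ ℕ) → ℤ_[p] := fun q =>
    MvPowerSeries.coeff q.1 F * coeff q.2 (Q q.1)
  have hc : Tendsto c cofinite (nhds 0) :=
    tendsto_cofinite_mul_of_finite_support (g := fun α β => coeff β (Q α)) hF fun α =>
      (Q α).support.finite_toSet.subset fun _ => mem_support_iff.mpr
  obtain ⟨G, hG⟩ :
      ∃ G : MvPowerSeries (Fin n) ℤ_[p], ∀ β, MvPowerSeries.coeff β G = ∑' α, c (α, β) :=
    ⟨fun β => ∑' α, c (α, β), fun β => by rfl⟩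
  refine ⟨G, (tendsto_cofinite_tsum_of_tendsto_cofinite_prod hc).congr fun β => (hG β).symm,
    fun x => ?_⟩
  let t : (Fin k →₀ ℕ) × (Fin n →₀ ℕ) → ℤ_[p] := fun q =>
    MvPowerSeries.coeff q.1 F * (coeff q.2 (Q q.1) * ∏ i, x i ^ q.2 i)
  have hfin : ∀ α, (Function.support fun β => coeff β (Q α) * ∏ i, x i ^ β i).Finite :=
    fun α => (Q α).support.finite_toSet.subset fun _ hβ =>
      mem_support_iff.mpr (left_ne_zero_of_mul hβ)
  have ht : Summable t := NonarchimedeanAddGroup.summable_of_tendsto_cofinite_zero <|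
    tendsto_cofinite_mul_of_finite_support
      (g := fun α β => coeff β (Q α) * ∏ i, x i ^ β i) hF hfin
  have hc_col : ∀ β, Summable fun α => c (α, β) := fun β =>
    (NonarchimedeanAddGroup.summable_of_tendsto_cofinite_zero hc).comp_injective
      (Prod.mk_left_injective β)
  calc mvEval G x
      = ∑' β, ∑' α, t (α, β) := tsum_congr fun β => by
        rw [hG, ← (hc_col β).tsum_mul_right]
        exact tsum_congr fun α => mul_assoc _ _ _
    _ = ∑' α, ∑' β, t (α, β) := ht.tsum_comm (f := fun α β => t (α, β))
    _ = ∑' α, MvPowerSeries.coeff α F * eval x (Q α) := tsum_congr fun α => by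
        rw [eval_eq_tsum, ← (summable_of_hasFiniteSupport (hfin α)).tsum_mul_left]
    _ = mvEval F fun i => eval x (P i) := by simp only [mvEval, Q, map_prod, map_pow]

/-- The translate of an arithmetic differential operator of order `m` is again
an arithmetic differential operator of order `m`. -/
theorem ado_translate (p : ℕ) [Fact p.Prime]
    (δ : ℤ_[p] → ℤ_[p]) (hδ : ∀ x : ℤ_[p], (p : ℤ_[p]) * δ x = x - x ^ p)
    (m : ℕ) (g : ℤ_[p] → ℤ_[p]) (hg : IsADO δ m g) (c : ℤ_[p]) :
    IsADO δ m (fun x : ℤ_[p] => g (x + c)) := by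
  obtain ⟨F, hF, hFg⟩ := hg
  choose P hP using fun i : Fin (m + 1) => exists_eval_of_mem_deltaPolyFun <|
    deltaPolyFun_mono (Nat.lt_succ_iff.mp i.isLt)
      (iterate_comp_add_const_mem_deltaPolyFun hδ c i)
  obtain ⟨G, hG, hGF⟩ := hF.exists_mvEval_eq_mvEval_eval P
  refine ⟨G, hG, fun a => (hFg (a + c)).trans ?_⟩
  rw [hGF]
  exact congrArg (mvEval F) (funext fun i => hP i a)
end
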